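/- arXiv:2206.00257 — 5 statements merged into one kernel-verified Lean document; each statement's English description precedes it below -/
import Mathlib

section
/- Fix integers n_s, n_a ≥ 1 and a horizon K ≥ 1. Let A ⊆ ℝ^{n_a} be a nonempty compact convex action set, let c : ℝ^{n_s} × ℝ^{n_a} → ℝ be a continuous function that is jointly convex (the negative reward), let T : ℝ^{n_s} × ℝ^{n_a} → ℝ^{n_s} be an affine map (the deterministic state transition), and let γ ∈ [0,1] be a discount factor. Define the negative Q-functions by backward recursion: Q⁻_{K−1}(s,a) = c(s,a), and for 0 ≤ k < K−1, Q⁻_k(s,a) = c(s,a) + γ · min_{a′ ∈ A} Q⁻_{k+1}(T(s,a), a′). Then for every 0 ≤ k ≤ K−1, the minimum in the recursion is attained, and Q⁻_k is continuous and jointly convex on ℝ^{n_s} × ℝ^{n_a}. -/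
/-!
Minimizing a jointly convex function over a convex set of actions yields a convex
function of the state, provided the minimum is attained: mix two minimizers with the
same weights as the states. Precomposition with the affine transition, scaling by
`γ ≥ 0` and adding `c` keep convexity, so each Bellman backup of a convex Q-function
is convex. In finite dimensions a convex function on the whole space is continuous,
hence attains its minimum over the compact action set, which keeps the backward
induction going.
-/

open Set

theorem IsMinOn.csInf_image_eq {α : Type*} {f : α → ℝ} {s : Set α} {a : α}
    (ha : a ∈ s) (h : IsMinOn f s a) : sInf (f '' s) = f a :=
  IsLeast.csInf_eq ⟨mem_image_of_mem f ha, forall_mem_image.2 fun _ hb => h hb⟩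

theorem ConvexOn.sInf_image_right_of_isMinOn {E F : Type*}
    [AddCommGroup E] [Module ℝ E] [AddCommGroup F] [Module ℝ F]
    {f : E × F → ℝ} (hf : ConvexOn ℝ univ f) {A : Set F} (hA : Convex ℝ A)
    (hmin : ∀ x, ∃ a ∈ A, IsMinOn (fun b => f (x, b)) A a) :
    ConvexOn ℝ univ (fun x => sInf ((fun b => f (x, b)) '' A)) := by
  choose m hmA hm using hmin
  have hval (x : E) : sInf ((fun b => f (x, b)) '' A) = f (x, m x) :=
    (hm x).csInf_image_eq (hmA x)
  refine ⟨convex_univ, fun x _ y _ p q hp hq hpq => ?_⟩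
  simp only [hval]
  calc f (p • x + q • y, m (p • x + q • y))
      ≤ f (p • x + q • y, p • m x + q • m y) := hm _ (hA (hmA x) (hmA y) hp hq hpq)
    _ = f (p • (x, m x) + q • (y, m y)) := rfl
    _ ≤ p • f (x, m x) + q • f (y, m y) := hf.2 trivial trivial hp hq hpq

section Bellman

variable {S U : Type*} [AddCommGroup S] [Module ℝ S] [AddCommGroup U] [Module ℝ U]

noncomputable def bellmanBackup (c : S × U → ℝ) (T : S × U →ᵃ[ℝ] S) (γ : ℝ) (A : Set U)
    (Q : S × U → ℝ) : S × U → ℝ :=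
  fun p => c p + γ * sInf ((fun a => Q (T p, a)) '' A)

theorem ConvexOn.bellmanBackup {c Q : S × U → ℝ} {T : S × U →ᵃ[ℝ] S} {γ : ℝ} {A : Set U}
    (hQ : ConvexOn ℝ univ Q) (hc : ConvexOn ℝ univ c) (hA : Convex ℝ A) (hγ : 0 ≤ γ)
    (hmin : ∀ s, ∃ a ∈ A, IsMinOn (fun b => Q (s, b)) A a) :
    ConvexOn ℝ univ (bellmanBackup c T γ A Q) := by
  have hV := (hQ.sInf_image_right_of_isMinOn hA hmin).comp_affineMap T
  exact hc.add (hV.smul hγ)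

end Bellman

theorem negQ_backward_recursion_convex_general (ns na K : ℕ)
    (A : Set (EuclideanSpace ℝ (Fin na)))
    (hA_ne : A.Nonempty) (hA_cpt : IsCompact A) (hA_conv : Convex ℝ A)
    (c : EuclideanSpace ℝ (Fin ns) × EuclideanSpace ℝ (Fin na) → ℝ)
    (hc_conv : ConvexOn ℝ Set.univ c)
    (T : (EuclideanSpace ℝ (Fin ns) × EuclideanSpace ℝ (Fin na)) →ᵃ[ℝ]
      EuclideanSpace ℝ (Fin ns))
    (γ : ℝ) (hγ : γ ∈ Set.Icc (0 : ℝ) 1)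
    (Q : ℕ → EuclideanSpace ℝ (Fin ns) × EuclideanSpace ℝ (Fin na) → ℝ)
    (hQ_last : ∀ s a, Q (K - 1) (s, a) = c (s, a))
    (hQ_rec : ∀ k < K - 1, ∀ s a,
      Q k (s, a) = c (s, a) + γ * sInf ((fun a' => Q (k + 1) (T (s, a), a')) '' A)) :
    ∀ k ≤ K - 1,
      (∀ s : EuclideanSpace ℝ (Fin ns), ∃ a' ∈ A, ∀ b ∈ A, Q k (s, a') ≤ Q k (s, b)) ∧
      Continuous (Q k) ∧ ConvexOn ℝ Set.univ (Q k) := by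
  have hcont {k} (hk : ConvexOn ℝ univ (Q k)) : Continuous (Q k) :=
    continuousOn_univ.1 (hk.continuousOn isOpen_univ)
  have hmin {k} (hk : ConvexOn ℝ univ (Q k)) (s) : ∃ a ∈ A, IsMinOn (fun b => Q k (s, b)) A a :=
    hA_cpt.exists_isMinOn hA_ne ((hcont hk).comp (Continuous.prodMk_right s)).continuousOn
  have hconv : ∀ k ≤ K - 1, ConvexOn ℝ univ (Q k) := by
    intro k hk
    induction hk using Nat.decreasingInduction with
    | self => rwa [show Q (K - 1) = c from funext fun ⟨s, a⟩ => hQ_last s a]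
    | of_succ k hk ih =>
      rw [show Q k = bellmanBackup c T γ A (Q (k + 1)) from
        funext fun ⟨s, a⟩ => hQ_rec k hk s a]
      exact ih.bellmanBackup hc_conv hA_conv hγ.1 (hmin ih)
  intro k hk
  exact ⟨hmin (hconv k hk), hcont (hconv k hk), hconv k hk⟩

/-- Convexity preservation along the Bellman backward recursion: for a
finite-horizon deterministic MDP with continuous jointly convex negative
reward `c`, affine state transition `T`, compact convex action set `A`, and
discount factor `γ ∈ [0,1]`, every negative Q-function `Q k` (for
`0 ≤ k ≤ K-1`) attains its minimum over actions, is continuous, and is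
jointly convex in the state-action pair. -/
theorem negQ_backward_recursion_convex (ns na K : ℕ)
    (hns : 1 ≤ ns) (hna : 1 ≤ na) (hK : 1 ≤ K)
    (A : Set (EuclideanSpace ℝ (Fin na)))
    (hA_ne : A.Nonempty) (hA_cpt : IsCompact A) (hA_conv : Convex ℝ A)
    (c : EuclideanSpace ℝ (Fin ns) × EuclideanSpace ℝ (Fin na) → ℝ)
    (hc_cont : Continuous c) (hc_conv : ConvexOn ℝ Set.univ c)
    (T : (EuclideanSpace ℝ (Fin ns) × EuclideanSpace ℝ (Fin na)) →ᵃ[ℝ]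
      EuclideanSpace ℝ (Fin ns))
    (γ : ℝ) (hγ : γ ∈ Set.Icc (0 : ℝ) 1)
    (Q : ℕ → EuclideanSpace ℝ (Fin ns) × EuclideanSpace ℝ (Fin na) → ℝ)
    (hQ_last : ∀ s a, Q (K - 1) (s, a) = c (s, a))
    (hQ_rec : ∀ k < K - 1, ∀ s a,
      Q k (s, a) = c (s, a) + γ * sInf ((fun a' => Q (k + 1) (T (s, a), a')) '' A)) :
    ∀ k ≤ K - 1,
      (∀ s : EuclideanSpace ℝ (Fin ns), ∃ a' ∈ A, ∀ b ∈ A, Q k (s, a') ≤ Q k (s, b)) ∧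
      Continuous (Q k) ∧ ConvexOn ℝ Set.univ (Q k) :=
  negQ_backward_recursion_convex_general ns na K A hA_ne hA_cpt hA_conv c hc_conv T γ hγ Q hQ_last
    hQ_rec
end

section
/- Let N ≥ 1 and d ≥ 1. Let f_i : ℝ^d → ℝ for i = 1,…,N be twice continuously differentiable functions and y_1,…,y_N ∈ ℝ. Define the mean-squared-error loss L : ℝ^d → ℝ by L(w) = (1/(2N)) Σ_{i=1}^N (f_i(w) − y_i)². Suppose w* ∈ ℝ^d satisfies f_i(w*) = y_i for all i, and that for every nonzero X ∈ ℝ^d there exists i with Df_i(w*)[X] ≠ 0 (equivalently, the Gram matrix Σ_i ∇f_i(w*) ∇f_i(w*)ᵀ is positive definite). Then there exists ε > 0 such that L is strictly convex on the open ball of radius ε centered at w*. -/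
/-!
At an interpolation point the residuals vanish, so the Hessian of the loss there is the
Gauss–Newton term `(1/N) ∑ᵢ (Dfᵢ(w*)[X])²`, which is positive definite by nondegeneracy.
Positive definiteness is an open condition on a continuous Hessian (test it on the compact unit
sphere), so it persists on a ball around `w*`; on that ball the restriction of the loss to every
segment has positive second derivative, hence the loss is strictly convex there.
-/

open Metric Set Filter Topology

section Hessian

variable {E F : Type*} [NormedAddCommGroup E] [NormedSpace ℝ E]
  [NormedAddCommGroup F] [NormedSpace ℝ F]

theorem ContDiff.differentiable_fderiv {φ : E → F} (hφ : ContDiff ℝ 2 φ) :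
    Differentiable ℝ (fderiv ℝ φ) :=
  (hφ.fderiv_right (by norm_num)).differentiable one_ne_zero

theorem eventually_forall_apply_self_pos [ProperSpace E] {A : E → E →L[ℝ] E →L[ℝ] ℝ} {w : E}
    (hA : ContinuousAt A w) (hpos : ∀ X ≠ 0, 0 < A w X X) :
    ∀ᶠ v in 𝓝 w, ∀ X ≠ 0, 0 < A v X X := by
  have hsphere : ∀ᶠ v in 𝓝 w, ∀ X ∈ sphere (0 : E) 1, 0 < A v X X :=
    (isCompact_sphere 0 1).eventually_forall_of_forall_eventually fun X hX =>
      have hAXX : ContinuousAt (fun p : E × E => A p.1 p.2 p.2) (w, X) :=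
        ((hA.comp continuousAt_fst).clm_apply continuousAt_snd).clm_apply continuousAt_snd
      hAXX.eventually (lt_mem_nhds (hpos X fun h => by simp [h] at hX))
  filter_upwards [hsphere] with v hv X hX
  have hnorm : 0 < ‖X‖ := norm_pos_iff.2 hX
  have hinv : 0 ≤ ‖X‖⁻¹ := inv_nonneg.2 hnorm.le
  have hscaled := hv (‖X‖⁻¹ • X) (by simp [norm_smul, hnorm.ne'])
  simp only [map_smul, FunLike.coe_smul, Pi.smul_apply, smul_eq_mul] at hscaled
  exact pos_of_mul_pos_right (pos_of_mul_pos_right hscaled hinv) hinv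

theorem hasDerivAt_comp_add_smul {φ : E → F} (hφ : Differentiable ℝ φ) (w X : E) (t : ℝ) :
    HasDerivAt (fun s : ℝ => φ (w + s • X)) (fderiv ℝ φ (w + t • X) X) t := by
  have hline : HasDerivAt (fun s : ℝ => w + s • X) X t := by
    simpa using ((hasDerivAt_id t).smul_const X).const_add w
  exact (hφ (w + t • X)).hasFDerivAt.comp_hasDerivAt t hline

theorem deriv_deriv_comp_add_smul {φ : E → ℝ} (hφ : ContDiff ℝ 2 φ) (w X : E) (t : ℝ) :
    deriv (deriv fun s : ℝ => φ (w + s • X)) t = fderiv ℝ (fderiv ℝ φ) (w + t • X) X X := by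
  have hderiv : deriv (fun s : ℝ => φ (w + s • X)) = fun s => fderiv ℝ φ (w + s • X) X :=
    funext fun s => (hasDerivAt_comp_add_smul (hφ.differentiable two_ne_zero) w X s).deriv
  rw [hderiv]
  exact ((ContinuousLinearMap.apply ℝ ℝ X).hasFDerivAt.comp_hasDerivAt t
    (hasDerivAt_comp_add_smul hφ.differentiable_fderiv w X t)).deriv

theorem strictConvexOn_of_fderiv_fderiv_apply_self_pos {s : Set E} (hs : Convex ℝ s)
    {φ : E → ℝ} (hφ : ContDiff ℝ 2 φ)
    (hpos : ∀ w ∈ s, ∀ X ≠ 0, 0 < fderiv ℝ (fderiv ℝ φ) w X X) : StrictConvexOn ℝ s φ := by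
  refine ⟨hs, fun x hx z hz hxz a b ha hb hab => ?_⟩
  have hseg : ∀ t ∈ Icc (0 : ℝ) 1, x + t • (z - x) ∈ s := fun t ht => by
    simpa [AffineMap.lineMap_apply_module', add_comm] using hs.lineMap_mem hx hz ht
  have hg : StrictConvexOn ℝ (Icc 0 1) fun t : ℝ => φ (x + t • (z - x)) := by
    refine strictConvexOn_of_deriv2_pos' (convex_Icc 0 1)
      (hφ.continuous.comp (by fun_prop)).continuousOn fun t ht => ?_
    rw [Function.iterate_succ_apply', Function.iterate_one, deriv_deriv_comp_add_smul hφ]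
    exact hpos _ (hseg t ht) _ (sub_ne_zero.2 hxz.symm)
  have hmid : a • x + b • z = x + (a • (0 : ℝ) + b • 1) • (z - x) := by
    rw [eq_sub_of_add_eq hab]
    simp only [smul_eq_mul, mul_zero, mul_one, zero_add]
    module
  simpa [hmid] using
    hg.2 (left_mem_Icc.2 zero_le_one) (right_mem_Icc.2 zero_le_one) zero_ne_one ha hb hab

theorem fderiv_fderiv_sub_sq_apply {φ : E → ℝ} (hφ : ContDiff ℝ 2 φ) (y : ℝ) (w X : E) :
    fderiv ℝ (fderiv ℝ fun v => (φ v - y) ^ 2) w X X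
      = 2 * fderiv ℝ φ w X ^ 2 + 2 * (φ w - y) * fderiv ℝ (fderiv ℝ φ) w X X := by
  have hdiff : Differentiable ℝ φ := hφ.differentiable two_ne_zero
  have hfirst : fderiv ℝ (fun v => (φ v - y) ^ 2) = fun v => (2 * (φ v - y)) • fderiv ℝ φ v := by
    funext v
    rw [(((hdiff v).hasFDerivAt.sub_const y).pow 2).fderiv]
    simp
  have hsecond : HasFDerivAt (fun v => (2 * (φ v - y)) • fderiv ℝ φ v) _ w :=
    (((hdiff w).hasFDerivAt.sub_const y).const_mul 2).smul
      (hφ.differentiable_fderiv w).hasFDerivAt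
  rw [hfirst, hsecond.fderiv]
  simp only [add_apply, smul_apply, ContinuousLinearMap.smulRight_apply, smul_eq_mul]
  ring

theorem fderiv_fderiv_const_mul_sum {ι : Type*} (u : Finset ι) {φ : ι → E → ℝ}
    (hφ : ∀ i, ContDiff ℝ 2 (φ i)) (c : ℝ) (w : E) :
    fderiv ℝ (fderiv ℝ fun v => c * ∑ i ∈ u, φ i v) w
      = c • ∑ i ∈ u, fderiv ℝ (fderiv ℝ (φ i)) w := by
  have hdiff : ∀ i v, DifferentiableAt ℝ (φ i) v := fun i v =>
    (hφ i).differentiable two_ne_zero v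
  have hfirst : fderiv ℝ (fun v => c * ∑ i ∈ u, φ i v)
      = fun v => c • ∑ i ∈ u, fderiv ℝ (φ i) v := by
    funext v
    rw [fderiv_const_mul (DifferentiableAt.fun_sum fun i _ => hdiff i v),
      fderiv_fun_sum fun i _ => hdiff i v]
  have hdiff' : ∀ i ∈ u, DifferentiableAt ℝ (fderiv ℝ (φ i)) w := fun i _ =>
    (hφ i).differentiable_fderiv w
  rw [hfirst, fderiv_fun_const_smul (DifferentiableAt.fun_sum hdiff'), fderiv_fun_sum hdiff']

end Hessian

theorem mse_strictly_convex_near_interpolation_general (N d : ℕ)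
    (f : Fin N → EuclideanSpace ℝ (Fin d) → ℝ)
    (hf : ∀ i, ContDiff ℝ 2 (f i))
    (y : Fin N → ℝ) (wstar : EuclideanSpace ℝ (Fin d))
    (hinterp : ∀ i, f i wstar = y i)
    (hnondeg : ∀ X : EuclideanSpace ℝ (Fin d), X ≠ 0 →
      ∃ i, fderiv ℝ (f i) wstar X ≠ 0) :
    ∃ ε > 0, StrictConvexOn ℝ (Metric.ball wstar ε)
      (fun w => (1 / (2 * (N : ℝ))) * ∑ i, (f i w - y i) ^ 2) := by
  set L := fun w => (1 / (2 * (N : ℝ))) * ∑ i, (f i w - y i) ^ 2 with hLdef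
  have hres : ∀ i, ContDiff ℝ 2 fun w => (f i w - y i) ^ 2 := fun i =>
    ((hf i).sub contDiff_const).pow 2
  have hL : ContDiff ℝ 2 L := contDiff_const.mul (ContDiff.sum fun i _ => hres i)
  have hHess : ∀ X ≠ 0, 0 < fderiv ℝ (fderiv ℝ L) wstar X X := by
    intro X hX
    obtain ⟨i₀, hi₀⟩ := hnondeg X hX
    have hN : (0 : ℝ) < N := Nat.cast_pos.2 i₀.pos
    rw [hLdef, fderiv_fderiv_const_mul_sum Finset.univ hres]
    simp only [smul_apply, sum_apply, smul_eq_mul, fderiv_fderiv_sub_sq_apply (hf _), hinterp,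
      sub_self, mul_zero, zero_mul, add_zero]
    exact mul_pos (by positivity)
      (Finset.sum_pos' (fun i _ => by positivity) ⟨i₀, Finset.mem_univ _, by positivity⟩)
  have hcont : Continuous (fderiv ℝ (fderiv ℝ L)) :=
    (hL.fderiv_right (by norm_num)).continuous_fderiv one_ne_zero
  obtain ⟨ε, hε, hball⟩ := Metric.eventually_nhds_iff_ball.1
    (eventually_forall_apply_self_pos hcont.continuousAt hHess)
  exact ⟨ε, hε, strictConvexOn_of_fderiv_fderiv_apply_self_pos (convex_ball wstar ε) hL hball⟩

/-- Theorem 3 of the paper (precise form): if `w*` interpolates the noiseless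
data and the first derivatives of the network outputs at `w*` are jointly
nondegenerate (for every nonzero direction `X` some `Df_i(w*)[X] ≠ 0`), then
the MSE loss is strictly convex on a small ball around `w*`. -/
theorem mse_strictly_convex_near_interpolation (N d : ℕ) (hN : 1 ≤ N) (hd : 1 ≤ d)
    (f : Fin N → EuclideanSpace ℝ (Fin d) → ℝ)
    (hf : ∀ i, ContDiff ℝ 2 (f i))
    (y : Fin N → ℝ) (wstar : EuclideanSpace ℝ (Fin d))
    (hinterp : ∀ i, f i wstar = y i)
    (hnondeg : ∀ X : EuclideanSpace ℝ (Fin d), X ≠ 0 →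
      ∃ i, fderiv ℝ (f i) wstar X ≠ 0) :
    ∃ ε > 0, StrictConvexOn ℝ (Metric.ball wstar ε)
      (fun w => (1 / (2 * (N : ℝ))) * ∑ i, (f i w - y i) ^ 2) :=
  mse_strictly_convex_near_interpolation_general N d f hf y wstar hinterp hnondeg
end

section
/- Let N ≥ 1 and d ≥ 1. Let f_i : ℝ^d → ℝ for i = 1,…,N be twice continuously differentiable functions and y_1,…,y_N ∈ ℝ. Define the mean-squared-error loss L : ℝ^d → ℝ by L(w) = (1/(2N)) Σ_{i=1}^N (f_i(w) − y_i)². Fix w ∈ ℝ^d, λ > 0, and M > 0 such that for every unit vector X ∈ ℝ^d: (1/N) Σ_{i=1}^N (Df_i(w)[X])² ≥ λ and |D²f_i(w)[X, X]| ≤ M for all i. If max_{1 ≤ i ≤ N} |f_i(w) − y_i| < λ / M, then for every unit vector X the second derivative at t = 0 of t ↦ L(w + tX) is strictly positive. -/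
/-!
Along a unit direction `X`, write `gᵢ(t) = fᵢ(w + tX)` and `rᵢ = fᵢ(w) − yᵢ`. The second derivative
of the loss at `t = 0` is `(1/N) Σ gᵢ'(0)² + (1/N) Σ rᵢ gᵢ''(0)`: a Gauss–Newton term, at least `λ`,
plus a residual term whose summands satisfy `|rᵢ gᵢ''(0)| ≤ |rᵢ| M < λ`, so it exceeds `−λ`.
-/

open Finset

theorem HasDerivAt.sq_sub_const {g : ℝ → ℝ} {g' t : ℝ} (y : ℝ) (h : HasDerivAt g g' t) :
    HasDerivAt (fun s => (g s - y) ^ 2) (2 * (g t - y) * g') t := by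
  simpa using (h.sub_const y).fun_pow 2

section SumOfSquares

variable {ι : Type*} [Fintype ι] {g : ι → ℝ → ℝ} (y : ι → ℝ)

theorem deriv_sum_sq_sub (hg : ∀ i, Differentiable ℝ (g i)) :
    deriv (fun t => ∑ i, (g i t - y i) ^ 2) = fun t => ∑ i, 2 * (g i t - y i) * deriv (g i) t :=
  funext fun t =>
    (HasDerivAt.fun_sum fun i _ => ((hg i t).hasDerivAt.sq_sub_const (y i))).deriv

theorem deriv_deriv_sum_sq_sub {t : ℝ} (hg : ∀ i, Differentiable ℝ (g i))
    (hg' : ∀ i, DifferentiableAt ℝ (deriv (g i)) t) :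
    deriv (deriv fun t => ∑ i, (g i t - y i) ^ 2) t =
      2 * ∑ i, (deriv (g i) t ^ 2 + (g i t - y i) * deriv (deriv (g i)) t) := by
  rw [deriv_sum_sq_sub y hg, mul_sum]
  refine (HasDerivAt.fun_sum fun i _ => ?_).deriv
  have hprod := (((hg i t).hasDerivAt.sub_const (y i)).const_mul 2).fun_mul (hg' i).hasDerivAt
  exact hprod.congr_deriv (by ring)

end SumOfSquares

theorem sum_add_pos_of_abs_lt {ι : Type*} [Fintype ι] [Nonempty ι] {a b : ι → ℝ} {lam : ℝ}
    (ha : Fintype.card ι * lam ≤ ∑ i, a i) (hb : ∀ i, |b i| < lam) :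
    0 < ∑ i, (a i + b i) := by
  have hsum_b : -(Fintype.card ι * lam) < ∑ i, b i := by
    calc -(Fintype.card ι * lam) = ∑ _i : ι, -lam := by simp
      _ < ∑ i, b i := sum_lt_sum_of_nonempty univ_nonempty fun i _ => (abs_lt.mp (hb i)).1
  rw [sum_add_distrib]
  linarith

theorem mse_second_derivative_pos_of_small_residuals_general (N d : ℕ) (hN : 1 ≤ N)
    (f : Fin N → EuclideanSpace ℝ (Fin d) → ℝ)
    (hf : ∀ i, ContDiff ℝ 2 (f i))
    (y : Fin N → ℝ) (w : EuclideanSpace ℝ (Fin d))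
    (lam M : ℝ) (hM : 0 < M)
    (hgram : ∀ X : EuclideanSpace ℝ (Fin d), ‖X‖ = 1 →
      lam ≤ (1 / (N : ℝ)) * ∑ i, (deriv (fun t : ℝ => f i (w + t • X)) 0) ^ 2)
    (hsecond : ∀ X : EuclideanSpace ℝ (Fin d), ‖X‖ = 1 →
      ∀ i, |deriv (deriv (fun t : ℝ => f i (w + t • X))) 0| ≤ M)
    (hres : ∀ i, |f i w - y i| < lam / M) :
    ∀ X : EuclideanSpace ℝ (Fin d), ‖X‖ = 1 →
      0 < deriv (deriv (fun t : ℝ =>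
        (1 / (2 * (N : ℝ))) * ∑ i, (f i (w + t • X) - y i) ^ 2)) 0 := by
  intro X hX
  have : Nonempty (Fin N) := ⟨⟨0, hN⟩⟩
  have hNpos : (0 : ℝ) < N := by exact_mod_cast hN
  set g : Fin N → ℝ → ℝ := fun i t => f i (w + t • X)
  have hg : ∀ i, ContDiff ℝ 2 (g i) := fun i =>
    (hf i).comp (contDiff_const.add (contDiff_id.smul contDiff_const))
  simp only [deriv_const_mul_field']
  rw [deriv_deriv_sum_sq_sub y (fun i => (hg i).differentiable two_ne_zero)
    (fun i => ((hg i).deriv' (n := 1)).differentiable one_ne_zero 0)]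
  have hgauss_newton : N * lam ≤ ∑ i, deriv (g i) 0 ^ 2 := by
    simpa [← le_div_iff₀' hNpos, div_eq_inv_mul] using hgram X hX
  have hresidual : ∀ i, |(g i 0 - y i) * deriv (deriv (g i)) 0| < lam := fun i =>
    calc |(g i 0 - y i) * deriv (deriv (g i)) 0| ≤ |f i w - y i| * M := by
          rw [abs_mul]
          simpa [g] using mul_le_mul_of_nonneg_left (hsecond X hX i) (abs_nonneg (f i w - y i))
      _ < lam := (lt_div_iff₀ hM).mp (hres i)
  exact mul_pos (by positivity)
    (mul_pos two_pos (sum_add_pos_of_abs_lt (by simpa using hgauss_newton) hresidual))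

/-- Small residuals preserve positivity of the directional second derivative of
the MSE loss: if along every unit direction `X` the Gram quadratic form of the
first directional derivatives is at least `λ` and every second directional
derivative is bounded by `M` in absolute value, and all residuals satisfy
`|f_i w − y_i| < λ / M`, then the second derivative at `t = 0` of
`t ↦ L (w + t X)` is strictly positive for every unit direction `X`. -/
theorem mse_second_derivative_pos_of_small_residuals (N d : ℕ) (hN : 1 ≤ N) (hd : 1 ≤ d)
    (f : Fin N → EuclideanSpace ℝ (Fin d) → ℝ)
    (hf : ∀ i, ContDiff ℝ 2 (f i))
    (y : Fin N → ℝ) (w : EuclideanSpace ℝ (Fin d))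
    (lam M : ℝ) (hlam : 0 < lam) (hM : 0 < M)
    (hgram : ∀ X : EuclideanSpace ℝ (Fin d), ‖X‖ = 1 →
      lam ≤ (1 / (N : ℝ)) * ∑ i, (deriv (fun t : ℝ => f i (w + t • X)) 0) ^ 2)
    (hsecond : ∀ X : EuclideanSpace ℝ (Fin d), ‖X‖ = 1 →
      ∀ i, |deriv (deriv (fun t : ℝ => f i (w + t • X))) 0| ≤ M)
    (hres : ∀ i, |f i w - y i| < lam / M) :
    ∀ X : EuclideanSpace ℝ (Fin d), ‖X‖ = 1 →
      0 < deriv (deriv (fun t : ℝ =>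
        (1 / (2 * (N : ℝ))) * ∑ i, (f i (w + t • X) - y i) ^ 2)) 0 :=
  mse_second_derivative_pos_of_small_residuals_general N d hN f hf y w lam M hM hgram hsecond hres
end

section
/- Let N ≥ 1 and d ≥ 1. Let f_i : ℝ^d → ℝ for i = 1,…,N be twice continuously differentiable functions and y_1,…,y_N ∈ ℝ. Define the mean-squared-error loss L : ℝ^d → ℝ by L(w) = (1/(2N)) Σ_{i=1}^N (f_i(w) − y_i)². Fix w, X ∈ ℝ^d and η > 0, write u_i = d/dt|_{t=0} f_i(w + tX), v_i = d²/dt²|_{t=0} f_i(w + tX), and e_i = f_i(w) − y_i. Assume |v_j| ≤ η |u_j| for every j, and (min_{1 ≤ i ≤ N} |u_i|)² > η · (max_{1 ≤ j ≤ N} |u_j|) · (max_{1 ≤ k ≤ N} |e_k|). Then the second derivative at t = 0 of t ↦ L(w + tX) is strictly positive. -/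
/-!
Along the line `t ↦ w + t X` the loss is `(1/2N) Σ (g_i - y_i)²` with `g_i(t) = f_i(w + t X)`,
so its second derivative at `0` is `(1/N) Σ (u_i² + e_i v_i)`. Each summand is positive: `u_i²` is
at least `(min |u|)²`, while `|e_i v_i| ≤ η |e_i| |u_i| ≤ η (max |u|) (max |e|)`, which the region
condition makes strictly smaller.
-/

section IteratedDeriv

variable {𝕜 : Type*} [NontriviallyNormedField 𝕜]

lemma deriv_deriv_eq_iteratedDeriv_two (f : 𝕜 → 𝕜) : deriv (deriv f) = iteratedDeriv 2 f := by
  rw [iteratedDeriv_succ, iteratedDeriv_one]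

lemma iteratedDeriv_two_sub_const_sq {g : 𝕜 → 𝕜} {x : 𝕜} (hg : ContDiffAt 𝕜 2 g x) (c : 𝕜) :
    iteratedDeriv 2 (fun t => (g t - c) ^ 2) x =
      2 * (deriv g x ^ 2 + (g x - c) * iteratedDeriv 2 g x) := by
  have hgc : ContDiffAt 𝕜 2 (fun t => g t - c) x := hg.sub contDiffAt_const
  have hshift : iteratedDeriv 2 (fun t => g t - c) x = iteratedDeriv 2 g x := by
    simp [iteratedDeriv_fun_sub hg contDiffAt_const, iteratedDeriv_const]
  simp only [sq]
  rw [iteratedDeriv_fun_mul hgc hgc]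
  simp only [Nat.reduceAdd, Finset.sum_range_succ, Finset.range_one, Finset.sum_singleton,
    Nat.choose_zero_right, Nat.cast_one, iteratedDeriv_zero, one_mul, tsub_zero, hshift,
    Nat.choose_succ_self_right, Nat.cast_ofNat, iteratedDeriv_one, deriv_sub_const_fun,
    Nat.add_one_sub_one, Nat.choose_self, tsub_self]
  ring

lemma iteratedDeriv_two_const_mul_sum_sub_sq {ι : Type*} {s : Finset ι} {g : ι → 𝕜 → 𝕜}
    {x : 𝕜} (hg : ∀ i ∈ s, ContDiffAt 𝕜 2 (g i) x) (a : 𝕜) (y : ι → 𝕜) :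
    iteratedDeriv 2 (fun t => a * ∑ i ∈ s, (g i t - y i) ^ 2) x =
      a * ∑ i ∈ s, 2 * (deriv (g i) x ^ 2 + (g i x - y i) * iteratedDeriv 2 (g i) x) := by
  rw [iteratedDeriv_const_mul_field,
    iteratedDeriv_fun_sum fun i hi => ((hg i hi).sub contDiffAt_const).pow 2]
  congr 1
  exact Finset.sum_congr rfl fun i hi => iteratedDeriv_two_sub_const_sq (hg i hi) (y i)

end IteratedDeriv

lemma sq_add_mul_pos_of_abs_le {a b c m U E η : ℝ} (hη : 0 ≤ η) (hm : 0 ≤ m) (hma : m ≤ |a|)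
    (haU : |a| ≤ U) (hcE : |c| ≤ E) (hb : |b| ≤ η * |a|) (h : η * U * E < m ^ 2) :
    0 < a ^ 2 + c * b := by
  have hcb : |c * b| ≤ η * U * E := by
    rw [abs_mul]
    calc |c| * |b| ≤ E * (η * U) := by
          gcongr
          · exact (abs_nonneg c).trans hcE
          · exact hb.trans (by gcongr)
      _ = η * U * E := by ring
  have ha : m ^ 2 ≤ a ^ 2 := by
    rw [← sq_abs a]
    gcongr
  linarith [neg_abs_le (c * b)]

theorem mse_second_derivative_pos_region_general (N d : ℕ) (hN : 1 ≤ N)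
    (f : Fin N → EuclideanSpace ℝ (Fin d) → ℝ)
    (hf : ∀ i, ContDiff ℝ 2 (f i))
    (y : Fin N → ℝ) (w X : EuclideanSpace ℝ (Fin d))
    (η : ℝ) (hη : 0 < η)
    (u v e : Fin N → ℝ)
    (hu : ∀ i, u i = deriv (fun t : ℝ => f i (w + t • X)) 0)
    (hv : ∀ i, v i = deriv (deriv (fun t : ℝ => f i (w + t • X))) 0)
    (he : ∀ i, e i = f i w - y i)
    (hratio : ∀ j, |v j| ≤ η * |u j|)
    (hregion :
      (Finset.univ.inf' (Finset.univ_nonempty_iff.mpr ⟨⟨0, hN⟩⟩) fun i => |u i|) ^ 2 >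
        η * (Finset.univ.sup' (Finset.univ_nonempty_iff.mpr ⟨⟨0, hN⟩⟩) fun j => |u j|) *
          (Finset.univ.sup' (Finset.univ_nonempty_iff.mpr ⟨⟨0, hN⟩⟩) fun k => |e k|)) :
    0 < deriv (deriv (fun t : ℝ =>
      (1 / (2 * (N : ℝ))) * ∑ i, (f i (w + t • X) - y i) ^ 2)) 0 := by
  have hne : (Finset.univ : Finset (Fin N)).Nonempty := Finset.univ_nonempty_iff.mpr ⟨⟨0, hN⟩⟩
  set line : Fin N → ℝ → ℝ := fun i t => f i (w + t • X)
  have hline : ∀ i, ContDiff ℝ 2 (line i) := fun i => (hf i).comp (by fun_prop)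
  rw [deriv_deriv_eq_iteratedDeriv_two,
    iteratedDeriv_two_const_mul_sum_sub_sq fun i _ => (hline i).contDiffAt]
  refine mul_pos (by positivity) (Finset.sum_pos (fun i _ => mul_pos two_pos ?_) hne)
  have hline_zero : line i 0 = f i w := by simp [line]
  rw [← hu i, hline_zero, ← he i, ← deriv_deriv_eq_iteratedDeriv_two, ← hv i]
  exact sq_add_mul_pos_of_abs_le hη.le (Finset.le_inf' hne _ fun j _ => abs_nonneg (u j))
    (Finset.inf'_le _ (Finset.mem_univ i)) (Finset.le_sup' (fun j => |u j|) (Finset.mem_univ i))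
    (Finset.le_sup' (fun k => |e k|) (Finset.mem_univ i)) (hratio i) hregion

/-- The sufficient condition defining the locally convex region of Theorem 4:
with `u_i`, `v_i` the first/second directional derivatives of the network
outputs along `X` and `e_i` the residuals, if `|v_j| ≤ η |u_j|` for all `j`
and `(min_i |u_i|)² > η · (max_j |u_j|) · (max_k |e_k|)`, then the second
derivative at `t = 0` of `t ↦ L (w + t X)` is strictly positive. -/
theorem mse_second_derivative_pos_region (N d : ℕ) (hN : 1 ≤ N) (hd : 1 ≤ d)
    (f : Fin N → EuclideanSpace ℝ (Fin d) → ℝ)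
    (hf : ∀ i, ContDiff ℝ 2 (f i))
    (y : Fin N → ℝ) (w X : EuclideanSpace ℝ (Fin d))
    (η : ℝ) (hη : 0 < η)
    (u v e : Fin N → ℝ)
    (hu : ∀ i, u i = deriv (fun t : ℝ => f i (w + t • X)) 0)
    (hv : ∀ i, v i = deriv (deriv (fun t : ℝ => f i (w + t • X))) 0)
    (he : ∀ i, e i = f i w - y i)
    (hratio : ∀ j, |v j| ≤ η * |u j|)
    (hregion :
      (Finset.univ.inf' (Finset.univ_nonempty_iff.mpr ⟨⟨0, hN⟩⟩) fun i => |u i|) ^ 2 >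
        η * (Finset.univ.sup' (Finset.univ_nonempty_iff.mpr ⟨⟨0, hN⟩⟩) fun j => |u j|) *
          (Finset.univ.sup' (Finset.univ_nonempty_iff.mpr ⟨⟨0, hN⟩⟩) fun k => |e k|)) :
    0 < deriv (deriv (fun t : ℝ =>
      (1 / (2 * (N : ℝ))) * ∑ i, (f i (w + t • X) - y i) ^ 2)) 0 :=
  mse_second_derivative_pos_region_general N d hN f hf y w X η hη u v e hu hv he hratio hregion
end

section
/- Let N ≥ 1, let u, v, e : Fin N → ℝ, and let η > 0. Assume |v j| ≤ η · |u j| for every j, and (min_{i} |u i|)² > η · (max_{j} |u j|) · (max_{k} |e k|). Then Σ_{i} (u i)² + Σ_{i} (e i) · (v i) > 0. -/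
/-- Algebraic core of Theorem 4: if `|v j| ≤ η |u j|` for all `j` and
`(min_i |u i|)² > η · (max_j |u j|) · (max_k |e k|)`, then
`Σ_i (u i)² + Σ_i (e i)·(v i) > 0`. -/
theorem gram_plus_residual_pos (N : ℕ) (hN : 1 ≤ N)
    (u v e : Fin N → ℝ) (η : ℝ) (hη : 0 < η)
    (hratio : ∀ j, |v j| ≤ η * |u j|)
    (hregion :
      (Finset.univ.inf' (Finset.univ_nonempty_iff.mpr ⟨⟨0, hN⟩⟩) fun i => |u i|) ^ 2 >
        η * (Finset.univ.sup' (Finset.univ_nonempty_iff.mpr ⟨⟨0, hN⟩⟩) fun j => |u j|) *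
          (Finset.univ.sup' (Finset.univ_nonempty_iff.mpr ⟨⟨0, hN⟩⟩) fun k => |e k|)) :
    0 < (∑ i, (u i) ^ 2) + ∑ i, e i * v i := by
  have hne : (Finset.univ : Finset (Fin N)).Nonempty :=
    Finset.univ_nonempty_iff.mpr ⟨⟨0, hN⟩⟩
  set m := Finset.univ.inf' hne fun i => |u i| with hm
  set Mu := Finset.univ.sup' hne fun j => |u j| with hMu
  set Me := Finset.univ.sup' hne fun k => |e k| with hMe
  rw [← Finset.sum_add_distrib]
  have hkey : ∀ i : Fin N, m ^ 2 - η * Mu * Me ≤ u i ^ 2 + e i * v i := by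
    intro i
    have h1 : m ≤ |u i| := Finset.inf'_le _ (Finset.mem_univ i)
    have h2 : |u i| ≤ Mu := Finset.le_sup' (fun j => |u j|) (Finset.mem_univ i)
    have h3 : |e i| ≤ Me := Finset.le_sup' (fun k => |e k|) (Finset.mem_univ i)
    have hm0 : 0 ≤ m := Finset.le_inf' hne _ fun j _ => abs_nonneg _
    have hu2 : m ^ 2 ≤ u i ^ 2 := by
      calc m ^ 2 ≤ |u i| ^ 2 := by nlinarith
        _ = u i ^ 2 := sq_abs _
    have hev : |e i * v i| ≤ η * Mu * Me := by
      rw [abs_mul]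
      calc |e i| * |v i| ≤ Me * (η * |u i|) :=
            mul_le_mul h3 (hratio i) (abs_nonneg _) ((abs_nonneg _).trans h3)
        _ ≤ η * Mu * Me := by
            have hMe0 : 0 ≤ Me := (abs_nonneg (e i)).trans h3
            nlinarith [mul_nonneg (mul_nonneg hη.le hMe0) (sub_nonneg.mpr h2)]
    have := neg_abs_le (e i * v i)
    linarith
  have hpos : 0 < m ^ 2 - η * Mu * Me := by linarith
  calc (0 : ℝ) < ∑ _i : Fin N, (m ^ 2 - η * Mu * Me) := by
        rw [Finset.sum_const]
        have : 0 < N := hN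
        positivity
    _ ≤ ∑ i, (u i ^ 2 + e i * v i) := Finset.sum_le_sum fun i _ => hkey i
end
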